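/- General prophecy soundness: for φ = ∀π₁.∃π₂.…∀π_{2n-1}.∃π_{2n}.ψ, a prophecy family Ξ = {Ξ_{2i-1}}_{i=1}^n where each ξ ∈ Ξ_{2i-1} is an LTL formula over {π₁,…,π_{2i-1}}, and fresh prophecy variables P = {p^ξ}, one has K ⊨ φ if and only if K^P ⊨ φ^{P,Ξ}, where φ^{P,Ξ} has the same quantifier prefix and body ((X G ⋀_{i=1}^n ⋀_{ξ∈Ξ_{2i-1}} ((p^ξ)_{π_{2i-1}} ↔ ξ)) → ψ). -/

import Mathlib

/-- Syntax of LTL formulas over atomic propositions `α` (with a primitive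
`true` constant). -/
inductive LTL (α : Type) where
  | tt : LTL α
  | atom : α → LTL α
  | conj : LTL α → LTL α → LTL α
  | neg : LTL α → LTL α
  | next : LTL α → LTL α
  | untl : LTL α → LTL α → LTL α

/-- Satisfaction of an LTL formula on a trace `t : ℕ → Set α` at position `i`. -/
def LTL.sat {α : Type} (t : ℕ → Set α) : ℕ → LTL α → Prop
  | _, .tt => True
  | i, .atom a => a ∈ t i
  | i, .conj φ ψ => LTL.sat t i φ ∧ LTL.sat t i ψ
  | i, .neg φ => ¬ LTL.sat t i φ
  | i, .next φ => LTL.sat t (i + 1) φ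
  | i, .untl φ ψ =>
      ∃ k, i ≤ k ∧ LTL.sat t k ψ ∧ ∀ j, i ≤ j → j < k → LTL.sat t j φ

/-- Paths of a Kripke structure. -/
def IsKPath {St D : Type} (init : St) (κ : St → D → St) (τ : ℕ → St) : Prop :=
  τ 0 = init ∧ ∀ i, ∃ d : D, τ (i + 1) = κ (τ i) d

/-- The trace set of a Kripke structure. -/
def KTraces {St D α : Type} (init : St) (κ : St → D → St) (ℓ : St → Set α) :
    Set (ℕ → Set α) :=
  {t | ∃ τ : ℕ → St, IsKPath init κ τ ∧ ∀ i, t i = ℓ (τ i)}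

/-- Combine a list of `n` traces (for trace variables `π₁, …, π_n`, in order)
into one trace over variable-indexed atomic propositions `α × Fin n`. -/
def zipTraces {α : Type} (n : ℕ) (ts : List (ℕ → Set α)) : ℕ → Set (α × Fin n) :=
  fun k => {x | x.1 ∈ ts.getD x.2.val (fun _ => (∅ : Set α)) k}

/-- Renaming of atomic propositions in an LTL formula. -/
def LTL.map {α β : Type} (f : α → β) : LTL α → LTL β
  | .tt => .tt
  | .atom a => .atom (f a)
  | .conj φ ψ => .conj (φ.map f) (ψ.map f)
  | .neg φ => .neg (φ.map f)
  | .next φ => .next (φ.map f)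
  | .untl φ ψ => .untl (φ.map f) (ψ.map f)

/-- Derived eventually, globally, implication, biimplication, conjunction of
a list. -/
def LTL.ev {α : Type} (ψ : LTL α) : LTL α := .untl .tt ψ
def LTL.glob {α : Type} (ψ : LTL α) : LTL α := .neg (LTL.ev (.neg ψ))
def LTL.imp {α : Type} (φ ψ : LTL α) : LTL α := .neg (.conj φ (.neg ψ))
def LTL.biimp {α : Type} (φ ψ : LTL α) : LTL α := .conj (φ.imp ψ) (ψ.imp φ)
def LTL.conjList {α : Type} (l : List (LTL α)) : LTL α := l.foldr .conj .tt

/-- All atomic propositions occurring in the formula satisfy `P`. -/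
def LTL.OnlyOn {α : Type} (P : α → Prop) : LTL α → Prop
  | .tt => True
  | .atom a => P a
  | .conj φ ψ => φ.OnlyOn P ∧ ψ.OnlyOn P
  | .neg φ => φ.OnlyOn P
  | .next φ => φ.OnlyOn P
  | .untl φ ψ => φ.OnlyOn P ∧ ψ.OnlyOn P

/-- Transition function of the prophecy-extended structure `K^P`: states are
pairs of a state of `K` and a valuation of the prophecy variables; a direction
`(d, A)` moves the `K`-component along `d` and sets the prophecy valuation of
the successor to `A` (the valuation stored at the source is irrelevant, as for
the dedicated initial state). -/
def kPStep {St D P : Type} (κ : St → D → St) :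
    St × Set P → D × Set P → St × Set P :=
  fun sA dA => (κ sA.1 dA.1, dA.2)

/-- Labeling of `K^P` over `AP ⊎ P`: the original label of the `K`-component
together with the currently true prophecy variables. -/
def kPLabel {St α P : Type} (ℓ : St → Set α) : St × Set P → Set (α ⊕ P) :=
  fun sA => Sum.inl '' ℓ sA.1 ∪ Sum.inr '' sA.2

/-- Projection of a trace over `AP ⊎ P` to a trace over `AP`. -/
def projTrace {α P : Type} (t : ℕ → Set (α ⊕ P)) : ℕ → Set α :=
  fun i => {a | Sum.inl a ∈ t i}


/-- Semantics of a HyperLTL quantifier prefix (`true` = `∃`, `false` = `∀`). -/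
def hyperSat {α : Type} (Tr : Set (ℕ → Set α)) :
    List Bool → (List (ℕ → Set α) → Prop) → Prop
  | [], body => body []
  | true :: qs, body => ∃ t ∈ Tr, hyperSat Tr qs fun ts => body (t :: ts)
  | false :: qs, body => ∀ t ∈ Tr, hyperSat Tr qs fun ts => body (t :: ts)

/-- The strictly alternating prefix `∀π₁.∃π₂.…∀π_{2n-1}.∃π_{2n}`. -/
def altPrefix : ℕ → List Bool
  | 0 => []
  | n + 1 => false :: true :: altPrefix n

/-- The type of prophecy variables `p^ξ`: one for each member `ξ` of each set
`Ξ_{2i-1}` of the prophecy family (indexed here by `i : Fin n`). -/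
def ProphVar {α : Type} (n : ℕ) (Ξ : Fin n → List (LTL (α × Fin (2 * n)))) :
    Type :=
  Σ i : Fin n, Fin (Ξ i).length

/-- Embedding of original indexed atomic propositions into the
prophecy-extended alphabet. -/
def embedN {α : Type} (n : ℕ) (Ξ : Fin n → List (LTL (α × Fin (2 * n)))) :
    α × Fin (2 * n) → (α ⊕ ProphVar n Ξ) × Fin (2 * n) :=
  fun x => (Sum.inl x.1, x.2)

/-- The premise `X G ⋀_{i=1}^n ⋀_{ξ ∈ Ξ_{2i-1}} ((p^ξ)_{π_{2i-1}} ↔ ξ)`: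
each prophecy variable `p^ξ` for `ξ ∈ Ξ_{2i-1}`, read on the universally
quantified trace `π_{2i-1}` (0-indexed trace variable `2i`), holds iff the
prophecy formula `ξ` holds. -/
def prophPremiseN {α : Type} (n : ℕ)
    (Ξ : Fin n → List (LTL (α × Fin (2 * n)))) :
    LTL ((α ⊕ ProphVar n Ξ) × Fin (2 * n)) :=
  .next (LTL.glob (LTL.conjList ((List.finRange n).map fun i =>
    LTL.conjList ((List.finRange (Ξ i).length).map fun k =>
      LTL.biimp
        (.atom (Sum.inr ⟨i, k⟩, ⟨2 * i.val, by have := i.isLt; omega⟩))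
        (((Ξ i).get k).map (embedN n Ξ))))))

/-!
Every trace of `K^P` projects to a trace of `K`, every trace of `K` lifts to one of `K^P`, and
the conclusion `ψ` only sees projections; this gives `K ⊨ φ → K^P ⊨ φ^{P,Ξ}` at once. Conversely,
when the universal player picks a trace `t` of `K` for `π_{2i-1}`, we play in `K^P` the lift of
`t` whose prophecy `p^ξ`, for `ξ ∈ Ξ_{2i-1}`, holds exactly where `ξ` holds. This is a legal
move because `ξ` only reads `π₁, …, π_{2i-1}`, which are already chosen, and no later choice can
change its value. Along such plays the premise `X G ⋀ (p^ξ ↔ ξ)` holds, so the existential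
answers in `K^P`, projected to `K`, witness `ψ`.
-/

namespace LTL

variable {α β : Type}

theorem sat_imp (t : ℕ → Set α) (i : ℕ) (φ ψ : LTL α) :
    sat t i (φ.imp ψ) ↔ (sat t i φ → sat t i ψ) := by
  simp only [imp, sat]; tauto

theorem sat_biimp (t : ℕ → Set α) (i : ℕ) (φ ψ : LTL α) :
    sat t i (φ.biimp ψ) ↔ (sat t i φ ↔ sat t i ψ) := by
  simp only [biimp, sat_imp, sat]; tauto

theorem sat_glob (t : ℕ → Set α) (i : ℕ) (φ : LTL α) :
    sat t i φ.glob ↔ ∀ k, i ≤ k → sat t k φ := by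
  simp only [glob, ev, sat, not_exists, not_and]
  exact forall_congr' fun k => by tauto

theorem sat_conjList (t : ℕ → Set α) (i : ℕ) (l : List (LTL α)) :
    sat t i (conjList l) ↔ ∀ φ ∈ l, sat t i φ := by
  induction l <;> simp_all [conjList, sat]

theorem sat_map (f : α → β) (t : ℕ → Set β) (i : ℕ) (φ : LTL α) :
    sat t i (φ.map f) ↔ sat (fun k => f ⁻¹' t k) i φ := by
  induction φ generalizing i <;> simp only [map, sat, Set.mem_preimage, *]

theorem OnlyOn.mono {P Q : α → Prop} (hPQ : ∀ a, P a → Q a) {φ : LTL α} (hφ : φ.OnlyOn P) :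
    φ.OnlyOn Q := by
  induction φ <;> simp_all [OnlyOn]

theorem sat_congr_of_onlyOn {P : α → Prop} {t t' : ℕ → Set α}
    (h : ∀ k a, P a → (a ∈ t k ↔ a ∈ t' k)) {φ : LTL α} (hφ : φ.OnlyOn P) (i : ℕ) :
    sat t i φ ↔ sat t' i φ := by
  induction φ generalizing i <;> simp_all [OnlyOn, sat]

end LTL

theorem sat_zipTraces_append {α : Type} {N : ℕ} {ts us : List (ℕ → Set α)}
    {φ : LTL (α × Fin N)} (hφ : φ.OnlyOn fun x => x.2.val < ts.length) (i : ℕ) :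
    LTL.sat (zipTraces N (ts ++ us)) i φ ↔ LTL.sat (zipTraces N ts) i φ :=
  LTL.sat_congr_of_onlyOn (fun _ x hx => by
    simp only [zipTraces, Set.mem_ofPred_eq, List.getD_append _ _ _ _ hx]) hφ i

section Hyper

variable {β γ : Type} {Tr : Set (ℕ → Set β)} {TrP : Set (ℕ → Set γ)}
  {proj : (ℕ → Set γ) → ℕ → Set β}

theorem hyperSat_of_hyperSat_proj (hproj : ∀ t' ∈ TrP, proj t' ∈ Tr)
    (hlift : ∀ t ∈ Tr, ∃ t' ∈ TrP, proj t' = t)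
    {B : List (ℕ → Set β) → Prop} {B' : List (ℕ → Set γ) → Prop}
    (hB : ∀ ts', B (ts'.map proj) → B' ts') (qs : List Bool) :
    hyperSat Tr qs B → hyperSat TrP qs B' := by
  induction qs generalizing B B' with
  | nil => exact hB []
  | cons q qs ih =>
    cases q with
    | false =>
      intro h t' ht'
      exact ih (fun ts' hb => hB (t' :: ts') hb) (h (proj t') (hproj t' ht'))
    | true =>
      rintro ⟨t, ht, hs⟩
      obtain ⟨t', ht', rfl⟩ := hlift t ht
      exact ⟨t', ht', ih (fun ts' hb => hB (t' :: ts') hb) hs⟩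

theorem hyperSat_altPrefix_of_invariant (I : List (ℕ → Set γ) → Prop)
    (hproj : ∀ t' ∈ TrP, proj t' ∈ Tr)
    (hstep : ∀ ts', I ts' → ∀ t ∈ Tr,
      ∃ tE ∈ TrP, proj tE = t ∧ ∀ t', I (ts' ++ [tE, t']))
    {B : List (ℕ → Set β) → Prop} {B' : List (ℕ → Set γ) → Prop} {L : ℕ}
    (hB : ∀ ts', I ts' → ts'.length = L → B' ts' → B (ts'.map proj)) (m : ℕ)
    (ts' : List (ℕ → Set γ)) (hI : I ts') (hlen : ts'.length + 2 * m = L) :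
    hyperSat TrP (altPrefix m) (fun r => B' (ts' ++ r)) →
      hyperSat Tr (altPrefix m) (fun r => B (ts'.map proj ++ r)) := by
  induction m generalizing ts' with
  | zero => simpa [altPrefix, hyperSat] using hB ts' hI hlen
  | succ m ih =>
    intro h t ht
    obtain ⟨tE, htE, rfl, hI'⟩ := hstep ts' hI t ht
    obtain ⟨t', ht', hs⟩ := h tE htE
    refine ⟨proj t', hproj t' ht', ?_⟩
    simpa using ih (ts' ++ [tE, t']) (hI' t') (by simp; omega) (by simpa using hs)

end Hyper

section Kripke

variable {St D α P : Type} (init : St) (κ : St → D → St) (ℓ : St → Set α)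

def extendTrace (t : ℕ → Set α) (A : ℕ → Set P) : ℕ → Set (α ⊕ P) :=
  fun j => Sum.inl '' t j ∪ Sum.inr '' A j

@[simp]
theorem projTrace_extendTrace (t : ℕ → Set α) (A : ℕ → Set P) :
    projTrace (extendTrace t A) = t := by
  funext j; ext a; simp [projTrace, extendTrace]

theorem extendTrace_mem_KTraces {t : ℕ → Set α} (ht : t ∈ KTraces init κ ℓ)
    {A : ℕ → Set P} (hA : A 0 = ∅) :
    extendTrace t A ∈ KTraces (init, (∅ : Set P)) (kPStep κ) (kPLabel ℓ) := by
  obtain ⟨τ, ⟨h0, hstep⟩, hlab⟩ := ht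
  refine ⟨fun i => (τ i, A i), ⟨by simp [h0, hA], fun i => ?_⟩, fun i => ?_⟩
  · obtain ⟨d, hd⟩ := hstep i
    exact ⟨(d, A (i + 1)), by simp [kPStep, hd]⟩
  · simp [extendTrace, kPLabel, hlab]

theorem projTrace_mem_KTraces {t : ℕ → Set (α ⊕ P)}
    (ht : t ∈ KTraces (init, (∅ : Set P)) (kPStep κ) (kPLabel ℓ)) :
    projTrace t ∈ KTraces init κ ℓ := by
  obtain ⟨τ, ⟨h0, hstep⟩, hlab⟩ := ht
  refine ⟨fun i => (τ i).1, ⟨congrArg Prod.fst h0, fun i => ?_⟩, fun i => ?_⟩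
  · obtain ⟨d, hd⟩ := hstep i
    exact ⟨d.1, congrArg Prod.fst hd⟩
  · ext a; simp [projTrace, hlab i, kPLabel]

end Kripke

section Prophecy

variable {α : Type} {n : ℕ} {Ξ : Fin n → List (LTL (α × Fin (2 * n)))}

theorem preimage_embedN_zipTraces (ts : List (ℕ → Set (α ⊕ ProphVar n Ξ))) (k : ℕ) :
    embedN n Ξ ⁻¹' zipTraces (2 * n) ts k = zipTraces (2 * n) (ts.map projTrace) k := by
  ext ⟨a, v⟩
  simp only [Set.mem_preimage, zipTraces, embedN, Set.mem_ofPred_eq,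
    List.getD_eq_getElem?_getD, List.getElem?_map]
  cases ts[v.val]? <;> simp [projTrace]

theorem sat_map_embedN (ts : List (ℕ → Set (α ⊕ ProphVar n Ξ))) (j : ℕ)
    (ξ : LTL (α × Fin (2 * n))) :
    LTL.sat (zipTraces (2 * n) ts) j (ξ.map (embedN n Ξ)) ↔
      LTL.sat (zipTraces (2 * n) (ts.map projTrace)) j ξ := by
  simp only [LTL.sat_map, preimage_embedN_zipTraces]

def ProphecyCorrectAt (ts : List (ℕ → Set (α ⊕ ProphVar n Ξ))) (p : ProphVar n Ξ) (j : ℕ) :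
    Prop :=
  Sum.inr p ∈ ts.getD (2 * p.1.val) (fun _ => ∅) j ↔
    LTL.sat (zipTraces (2 * n) (ts.map projTrace)) j ((Ξ p.1).get p.2)

theorem sat_prophPremiseN (ts : List (ℕ → Set (α ⊕ ProphVar n Ξ))) :
    LTL.sat (zipTraces (2 * n) ts) 0 (prophPremiseN n Ξ) ↔
      ∀ j, 1 ≤ j → ∀ i k, ProphecyCorrectAt ts ⟨i, k⟩ j := by
  simp only [prophPremiseN, LTL.sat, LTL.sat_glob, LTL.sat_conjList, List.forall_mem_map,
    List.mem_finRange, true_implies, LTL.sat_biimp, sat_map_embedN, zero_add]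
  rfl

def ProphecyInvariant (ts : List (ℕ → Set (α ⊕ ProphVar n Ξ))) : Prop :=
  Even ts.length ∧ ∀ p : ProphVar n Ξ, 2 * p.1.val < ts.length → ∀ j, 1 ≤ j →
    ProphecyCorrectAt ts p j

variable (Ξ) in
/-- Empty at step 0, as the initial state of `K^P` carries no prophecy; of the variables set here
only those of the level being played are ever read. -/
def prophValuation (us : List (ℕ → Set α)) : ℕ → Set (ProphVar n Ξ) :=
  fun j => if j = 0 then ∅ else {p | LTL.sat (zipTraces (2 * n) us) j ((Ξ p.1).get p.2)}

theorem ProphecyInvariant.append_oracle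
    (hΞ : ∀ i : Fin n, ∀ ξ ∈ Ξ i, LTL.OnlyOn (fun x => x.2.val ≤ 2 * i.val) ξ)
    {ts : List (ℕ → Set (α ⊕ ProphVar n Ξ))} (hI : ProphecyInvariant ts)
    (t : ℕ → Set α) (t' : ℕ → Set (α ⊕ ProphVar n Ξ)) :
    ProphecyInvariant
      (ts ++ [extendTrace t (prophValuation Ξ (ts.map projTrace ++ [t])), t']) := by
  obtain ⟨⟨r, hr⟩, hcorrect⟩ := hI
  refine ⟨⟨r + 1, by simp; omega⟩, fun p hp j hj => ?_⟩
  simp only [List.length_append, List.length_cons, List.length_nil] at hp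
  have hreads : ∀ l : List (ℕ → Set α), 2 * p.1.val < l.length →
      ((Ξ p.1).get p.2).OnlyOn fun x => x.2.val < l.length := fun l hl =>
    (hΞ p.1 _ ((Ξ p.1).get_mem p.2)).mono fun x hx => by omega
  have hproj : (ts ++ [extendTrace t (prophValuation Ξ (ts.map projTrace ++ [t])), t']).map
      projTrace = (ts.map projTrace ++ [t]) ++ [projTrace t'] := by simp
  unfold ProphecyCorrectAt
  rw [hproj, sat_zipTraces_append (hreads _ (by simp; omega))]
  rcases Nat.lt_or_ge (2 * p.1.val) ts.length with hold | hnew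
  · rw [List.getD_append _ _ _ _ hold]
    exact (hcorrect p hold j hj).trans
      (sat_zipTraces_append (hreads (ts.map projTrace) (by simpa using hold)) j).symm
  · have hnew : 2 * p.1.val = ts.length := by omega
    rw [List.getD_append_right _ _ _ _ hnew.ge, hnew, Nat.sub_self]
    simp [extendTrace, prophValuation, show j ≠ 0 by omega]

theorem ProphecyInvariant.exists_extension {St D : Type} (init : St) (κ : St → D → St)
    (ℓ : St → Set α)
    (hΞ : ∀ i : Fin n, ∀ ξ ∈ Ξ i, LTL.OnlyOn (fun x => x.2.val ≤ 2 * i.val) ξ)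
    {ts : List (ℕ → Set (α ⊕ ProphVar n Ξ))} (hI : ProphecyInvariant ts)
    {t : ℕ → Set α} (ht : t ∈ KTraces init κ ℓ) :
    ∃ tE ∈ KTraces (init, (∅ : Set (ProphVar n Ξ))) (kPStep κ) (kPLabel ℓ),
      projTrace tE = t ∧ ∀ t', ProphecyInvariant (ts ++ [tE, t']) :=
  ⟨_, extendTrace_mem_KTraces init κ ℓ ht (if_pos rfl), projTrace_extendTrace t _,
    hI.append_oracle hΞ t⟩

end Prophecy

/-- general prophecy soundness: for
`φ = ∀π₁.∃π₂.…∀π_{2n-1}.∃π_{2n}.ψ`, a prophecy family `Ξ = {Ξ_{2i-1}}`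
(each `ξ ∈ Ξ_{2i-1}` mentioning only `π₁, …, π_{2i-1}`) and fresh prophecy
variables `P = {p^ξ}`, we have `K ⊨ φ` iff `K^P ⊨ φ^{P,Ξ}`, where `φ^{P,Ξ}`
has the same quantifier prefix and body
`(X G ⋀_i ⋀_{ξ∈Ξ_{2i-1}} ((p^ξ)_{π_{2i-1}} ↔ ξ)) → ψ`. -/
theorem prophecy_soundness_general {St D α : Type} (init : St)
    (κ : St → D → St) (ℓ : St → Set α) (n : ℕ)
    (ψ : LTL (α × Fin (2 * n)))
    (Ξ : Fin n → List (LTL (α × Fin (2 * n))))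
    (hΞ : ∀ i : Fin n, ∀ ξ ∈ Ξ i,
      LTL.OnlyOn (fun x => x.2.val ≤ 2 * i.val) ξ) :
    hyperSat (KTraces init κ ℓ) (altPrefix n)
      (fun ts => LTL.sat (zipTraces (2 * n) ts) 0 ψ) ↔
    hyperSat
      (KTraces ((init, (∅ : Set (ProphVar n Ξ)))) (kPStep κ) (kPLabel ℓ))
      (altPrefix n)
      (fun ts => LTL.sat (zipTraces (2 * n) ts) 0
        (LTL.imp (prophPremiseN n Ξ) (ψ.map (embedN n Ξ)))) := by
  constructor
  · exact hyperSat_of_hyperSat_proj (fun _ => projTrace_mem_KTraces init κ ℓ)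
      (fun t ht => ⟨_, extendTrace_mem_KTraces init κ ℓ ht (A := fun _ => ∅) rfl,
        projTrace_extendTrace t _⟩)
      (fun ts hψ => (LTL.sat_imp _ _ _ _).mpr fun _ => (sat_map_embedN ts 0 ψ).mpr hψ) _
  · intro h
    have hbody : ∀ ts, ProphecyInvariant ts → ts.length = 2 * n →
        LTL.sat (zipTraces (2 * n) ts) 0 ((prophPremiseN n Ξ).imp (ψ.map (embedN n Ξ))) →
        LTL.sat (zipTraces (2 * n) (ts.map projTrace)) 0 ψ := fun ts hI hlen hsat =>
      (sat_map_embedN ts 0 ψ).mp <| (LTL.sat_imp _ _ _ _).mp hsat <|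
        (sat_prophPremiseN ts).mpr fun j hj i k => hI.2 ⟨i, k⟩ (by omega) j hj
    simpa using hyperSat_altPrefix_of_invariant ProphecyInvariant
      (fun _ => projTrace_mem_KTraces init κ ℓ)
      (fun _ hI _ => hI.exists_extension init κ ℓ hΞ) hbody n []
      ⟨Even.zero, by simp⟩ (by simp) (by simpa using h)
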